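/- Let U₁, V₁ > 0, K ≥ 1 integer, Λ(x,λ)=erf((x-0.5-λ)/√(2λ)). Define M(ξ_R, ξ_FC) = (1/4)[3 + Λ(ξ_R,U₁) + (1-Λ(ξ_R,U₁))·Λ(ξ_FC,V₁)]. Then 0 ≤ M ≤ 1, M is nondecreasing in ξ_R and in ξ_FC, and ∂²(M^K)/∂ξ_R² ≥ 0 on the set {ξ_R ≤ U₁+0.5} and ∂²(M^K)/∂ξ_FC² ≥ 0 on the set {ξ_FC ≤ V₁+0.5}. -/

import Mathlib

/-- The Gauss error function `erf z = (2/√π) ∫_0^z e^{-t²} dt`. -/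
noncomputable def erf (z : ℝ) : ℝ := (2 / Real.sqrt Real.pi) * ∫ t in (0:ℝ)..z, Real.exp (-t ^ 2)

/-- `Λ(x,λ)`: the Gaussian (continuity-corrected) approximation of the Poisson CDF. -/
noncomputable def Lam (x lam : ℝ) : ℝ := erf ((x - 0.5 - lam) / Real.sqrt (2 * lam))

/-- Upper bound `P̃⁺_md` on the end-to-end missed-detection probability. -/
noncomputable def M (U₁ V₁ ξR ξFC : ℝ) : ℝ :=
  (1 / 4) * (3 + Lam ξR U₁ + (1 - Lam ξR U₁) * Lam ξFC V₁)

/-!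
In each variable separately `M` is an affine function `c + a * Λ` of `Λ = erf ∘ (affine map)`,
with slope `a = (1 - Λ(other variable)) / 4 ≥ 0` because `|erf| ≤ 1` (`erf` increases from `-1`
to `1`, its derivative being the Gaussian density). This gives the bounds and the monotonicity.
For convexity, `(f ^ K)'' = K (K - 1) f ^ (K - 2) f' ^ 2 + K f ^ (K - 1) f''` is nonnegative
wherever `f ≥ 0` and `f'' ≥ 0`, and `erf'' z = -2 z erf' z ≥ 0` exactly for `z ≤ 0`, i.e. for
`ξ ≤ λ + 1/2`.
-/

open Real MeasureTheory

noncomputable def erfDeriv (z : ℝ) : ℝ := 2 / √π * exp (-z ^ 2)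

lemma erfDeriv_pos (z : ℝ) : 0 < erfDeriv z := by unfold erfDeriv; positivity

lemma hasDerivAt_erf (z : ℝ) : HasDerivAt erf (erfDeriv z) z :=
  have hcont : Continuous fun t : ℝ => exp (-t ^ 2) := by fun_prop
  (hcont.integral_hasStrictDerivAt 0 z).hasDerivAt.const_mul _

lemma hasDerivAt_erfDeriv (z : ℝ) : HasDerivAt erfDeriv (-2 * z * erfDeriv z) z := by
  unfold erfDeriv
  exact ((hasDerivAt_pow 2 z).fun_neg.exp.const_mul (2 / √π)).congr_deriv (by push_cast; ring)

lemma monotone_erf : Monotone erf :=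
  monotone_of_deriv_nonneg (fun z => (hasDerivAt_erf z).differentiableAt)
    fun z => (hasDerivAt_erf z).deriv ▸ (erfDeriv_pos z).le

lemma erf_neg (z : ℝ) : erf (-z) = -erf z := by
  have h := intervalIntegral.integral_comp_neg (a := 0) (b := z) fun t => exp (-t ^ 2)
  simp only [neg_sq, neg_zero] at h
  rw [erf, erf, intervalIntegral.integral_symm, ← h, mul_neg]

lemma erf_le_one_of_nonneg {z : ℝ} (hz : 0 ≤ z) : erf z ≤ 1 := by
  have hint : IntegrableOn (fun t : ℝ => exp (-t ^ 2)) (Set.Ioi 0) := by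
    simpa using (integrable_exp_neg_mul_sq one_pos).integrableOn
  have hle : ∫ t in (0:ℝ)..z, exp (-t ^ 2) ≤ √π / 2 := by
    rw [intervalIntegral.integral_of_le hz]
    calc ∫ t in Set.Ioc 0 z, exp (-t ^ 2)
        ≤ ∫ t in Set.Ioi 0, exp (-t ^ 2) :=
          setIntegral_mono_set hint (.of_forall fun _ => (exp_pos _).le)
            Set.Ioc_subset_Ioi_self.eventuallyLE
      _ = √π / 2 := by simpa using integral_gaussian_Ioi 1
  have hπ : 0 < √π := sqrt_pos.mpr pi_pos
  calc erf z ≤ 2 / √π * (√π / 2) := by unfold erf; gcongr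
    _ = 1 := by field_simp

lemma erf_le_one (z : ℝ) : erf z ≤ 1 :=
  (monotone_erf (le_abs_self z)).trans (erf_le_one_of_nonneg (abs_nonneg z))

lemma neg_one_le_erf (z : ℝ) : -1 ≤ erf z := by
  linarith [erf_neg z ▸ erf_le_one (-z)]

lemma deriv_deriv_pow_nonneg {f f' : ℝ → ℝ} {f'' x : ℝ} (hf : ∀ t, HasDerivAt f (f' t) t)
    (hf' : HasDerivAt f' f'' x) (hfx : 0 ≤ f x) (hf'' : 0 ≤ f'') (K : ℕ) :
    0 ≤ deriv (deriv fun t => f t ^ K) x := by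
  have hd : deriv (fun t => f t ^ K) = fun t => K * f t ^ (K - 1) * f' t :=
    funext fun t => ((hf t).pow K).deriv
  have hd' : HasDerivAt (fun t => K * f t ^ (K - 1) * f' t)
      (K * ((K - 1 : ℕ) * f x ^ (K - 1 - 1) * f' x) * f' x + K * f x ^ (K - 1) * f'') x :=
    (((hf x).pow (K - 1)).const_mul (K : ℝ)).mul hf'
  rw [hd, hd'.deriv]
  have h1 : 0 ≤ (K : ℝ) * ((K - 1 : ℕ) * f x ^ (K - 1 - 1)) * (f' x * f' x) := by
    have := mul_self_nonneg (f' x)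
    positivity
  have h2 : 0 ≤ (K : ℝ) * f x ^ (K - 1) * f'' := by positivity
  linarith

lemma monotone_Lam (lam : ℝ) : Monotone fun x => Lam x lam :=
  fun _ _ hxy => monotone_erf (by gcongr)

lemma one_sub_Lam_nonneg (x lam : ℝ) : 0 ≤ 1 - Lam x lam := sub_nonneg.mpr (erf_le_one _)

lemma hasDerivAt_Lam_arg (x lam : ℝ) :
    HasDerivAt (fun t => (t - 0.5 - lam) / √(2 * lam)) (√(2 * lam))⁻¹ x :=
  ((((hasDerivAt_id' x).sub_const 0.5).sub_const lam).div_const _).congr_deriv (one_div _)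

lemma hasDerivAt_Lam (x lam : ℝ) :
    HasDerivAt (fun t => Lam t lam)
      (erfDeriv ((x - 0.5 - lam) / √(2 * lam)) * (√(2 * lam))⁻¹) x :=
  (hasDerivAt_erf _).comp x (hasDerivAt_Lam_arg x lam)

lemma deriv_deriv_pow_const_add_mul_Lam_nonneg {a c lam x : ℝ} (K : ℕ) (ha : 0 ≤ a)
    (hx : x ≤ lam + 0.5) (hfx : 0 ≤ c + a * Lam x lam) :
    0 ≤ deriv (deriv fun t => (c + a * Lam t lam) ^ K) x := by
  have hs : 0 ≤ (√(2 * lam))⁻¹ := inv_nonneg.mpr (sqrt_nonneg _)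
  have hz : (x - 0.5 - lam) / √(2 * lam) ≤ 0 :=
    div_nonpos_of_nonpos_of_nonneg (by linarith) (sqrt_nonneg _)
  have hf' (t : ℝ) : HasDerivAt (fun t => c + a * Lam t lam)
      (a * (erfDeriv ((t - 0.5 - lam) / √(2 * lam)) * (√(2 * lam))⁻¹)) t :=
    ((hasDerivAt_Lam t lam).const_mul a).const_add c
  have hf'' := (((hasDerivAt_erfDeriv _).comp x (hasDerivAt_Lam_arg x lam)).mul_const
    (√(2 * lam))⁻¹).const_mul a
  refine deriv_deriv_pow_nonneg hf' hf'' hfx ?_ K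
  have := (erfDeriv_pos ((x - 0.5 - lam) / √(2 * lam))).le
  exact mul_nonneg ha (mul_nonneg (mul_nonneg (mul_nonneg (by linarith) this) hs) hs)

lemma M_eq_left (U₁ V₁ ξR ξFC : ℝ) :
    M U₁ V₁ ξR ξFC = (3 + Lam ξFC V₁) / 4 + (1 - Lam ξFC V₁) / 4 * Lam ξR U₁ := by
  unfold M; ring

lemma M_eq_right (U₁ V₁ ξR ξFC : ℝ) :
    M U₁ V₁ ξR ξFC = (3 + Lam ξR U₁) / 4 + (1 - Lam ξR U₁) / 4 * Lam ξFC V₁ := by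
  unfold M; ring

lemma M_nonneg (U₁ V₁ ξR ξFC : ℝ) : 0 ≤ M U₁ V₁ ξR ξFC := by
  rw [M_eq_right]
  have h₁ : -1 ≤ Lam ξR U₁ := neg_one_le_erf _
  have h₂ : -1 ≤ Lam ξFC V₁ := neg_one_le_erf _
  nlinarith [mul_nonneg (one_sub_Lam_nonneg ξR U₁) (neg_le_iff_add_nonneg.mp h₂)]

lemma M_le_one (U₁ V₁ ξR ξFC : ℝ) : M U₁ V₁ ξR ξFC ≤ 1 := by
  rw [M_eq_right]
  nlinarith [one_sub_Lam_nonneg ξR U₁, one_sub_Lam_nonneg ξFC V₁]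

theorem Pmd_upper_bound_properties_general (U₁ V₁ : ℝ) (K : ℕ) :
    (∀ ξR ξFC : ℝ, 0 ≤ M U₁ V₁ ξR ξFC ∧ M U₁ V₁ ξR ξFC ≤ 1) ∧
    (∀ ξFC : ℝ, Monotone (fun ξR => M U₁ V₁ ξR ξFC)) ∧
    (∀ ξR : ℝ, Monotone (fun ξFC => M U₁ V₁ ξR ξFC)) ∧
    (∀ ξFC : ℝ, ∀ ξR ≤ U₁ + 0.5, 0 ≤ deriv (deriv (fun t => M U₁ V₁ t ξFC ^ K)) ξR) ∧
    (∀ ξR : ℝ, ∀ ξFC ≤ V₁ + 0.5, 0 ≤ deriv (deriv (fun t => M U₁ V₁ ξR t ^ K)) ξFC) := by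
  have ha (x lam : ℝ) : 0 ≤ (1 - Lam x lam) / 4 := by linarith [one_sub_Lam_nonneg x lam]
  refine ⟨fun ξR ξFC => ⟨M_nonneg .., M_le_one ..⟩, fun ξFC => ?_, fun ξR => ?_,
    fun ξFC ξR hξR => ?_, fun ξR ξFC hξFC => ?_⟩
  · simp only [M_eq_left]
    exact ((monotone_Lam U₁).const_mul (ha ξFC V₁)).const_add _
  · simp only [M_eq_right]
    exact ((monotone_Lam V₁).const_mul (ha ξR U₁)).const_add _
  · simp only [M_eq_left]
    exact deriv_deriv_pow_const_add_mul_Lam_nonneg K (ha ξFC V₁) hξR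
      (M_eq_left U₁ V₁ ξR ξFC ▸ M_nonneg ..)
  · simp only [M_eq_right]
    exact deriv_deriv_pow_const_add_mul_Lam_nonneg K (ha ξR U₁) hξFC
      (M_eq_right U₁ V₁ ξR ξFC ▸ M_nonneg ..)

theorem Pmd_upper_bound_properties (U₁ V₁ : ℝ) (hU : 0 < U₁) (hV : 0 < V₁)
    (K : ℕ) (hK : 1 ≤ K) :
    (∀ ξR ξFC : ℝ, 0 ≤ M U₁ V₁ ξR ξFC ∧ M U₁ V₁ ξR ξFC ≤ 1) ∧
    (∀ ξFC : ℝ, Monotone (fun ξR => M U₁ V₁ ξR ξFC)) ∧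
    (∀ ξR : ℝ, Monotone (fun ξFC => M U₁ V₁ ξR ξFC)) ∧
    (∀ ξFC : ℝ, ∀ ξR ≤ U₁ + 0.5, 0 ≤ deriv (deriv (fun t => M U₁ V₁ t ξFC ^ K)) ξR) ∧
    (∀ ξR : ℝ, ∀ ξFC ≤ V₁ + 0.5, 0 ≤ deriv (deriv (fun t => M U₁ V₁ ξR t ^ K)) ξFC) :=
  Pmd_upper_bound_properties_general U₁ V₁ K
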